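/- Assume the sample clouds N_n = {X_E^1/log n, …, X_E^n/log n} converge in probability onto a limit set G with gauge function g, and that the angular dependence function λ(ω) exists for each ω in the simplex S_Σ. Then r_ω = [min_{y ∈ B_ω} g(y)]^{−1}, and hence λ(ω) = max(ω₁,…,ω_d) × min_{y ∈ B_ω} g(y), where B_ω = ∪_{i=1}^d {x ∈ ℝ_+^d : x_i = ω_i/max(ω), x_j ≥ ω_j/max(ω) for all j ≠ i} is the boundary of R_ω = ∏_{j=1}^d (ω_j/max(ω), ∞), and r_ω = min{r ∈ [0,1] : rR_ω ∩ G = ∅}. -/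

import Mathlib

/-!
Geometry: `g` is at least `1` on the boundary `B` of the orthant `R = {x | ∀ j, ω j / M < x j}`
(`M = max ω`), and every point of the closed orthant is pushed onto `B` by a radial contraction.
By homogeneity `r • R` meets `G` exactly when `r * m < 1`, where `m = inf_B g`, which gives
`r_ω = m⁻¹`; likewise `G` meets the open orthant above `s • ω` when `s * M * m < 1` and misses the
closed one when `s * M * m > 1`.

Probability: `p v = P(X > v • ω) = ℓ(eᵛ) e^{-λ v}` is monotone, which forces `log p(v) / v → -λ`,
so the expected number `n p(s log n)` of points of the `n`-th cloud above `s • ω` tends to `0` if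
`λ s > 1` and to `∞` if `λ s < 1`. Because the clouds approach every point of `G`, the first is
impossible when `G` meets the open orthant above `s • ω`; because they stay close to `G`, and by
independence they avoid the closed orthant with probability `(1 - p)^n ≤ e^{-n p}`, the second is
impossible when `G` misses it. Comparing with the geometry for all `s` gives `λ = M * m`.
-/

open MeasureTheory Filter Topology ProbabilityTheory Pointwise

/-- The `n`-point sample cloud `{X 1 / r n, …, X n / r n}` of the scaled observations. -/
def sampleCloud {Ω : Type*} {d : ℕ} (X : ℕ → Ω → (Fin d → ℝ)) (r : ℕ → ℝ)
    (n : ℕ) (ω : Ω) : Set (Fin d → ℝ) :=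
  {y | ∃ i, 1 ≤ i ∧ i ≤ n ∧ y = (r n)⁻¹ • X i ω}

/-- Convergence in probability of random sets onto a deterministic set `G`, in the sense that
the Hausdorff distance to `G` tends to `0` in probability. -/
def ConvInProbOnto {Ω : Type*} [MeasurableSpace Ω] {d : ℕ} (μ : Measure Ω)
    (N : ℕ → Ω → Set (Fin d → ℝ)) (G : Set (Fin d → ℝ)) : Prop :=
  ∀ ε : ℝ, 0 < ε →
    Tendsto (fun n => μ {ω | ε < Metric.hausdorffDist (N n ω) G}) atTop (𝓝 0)

/-- `ℓ` is slowly varying at infinity. -/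
def SlowlyVaryingAtTop (ℓ : ℝ → ℝ) : Prop :=
  ∀ x : ℝ, 0 < x → Tendsto (fun t => ℓ (t * x) / ℓ t) atTop (𝓝 1)

open Set Real

section Gauge

variable {ι : Type*} {g : (ι → ℝ) → ℝ} {a u : ι → ℝ} {l : ι}

/-- The boundary `B_a` of the open orthant `{x | ∀ j, a j < x j}`. -/
def orthantBoundary (a : ι → ℝ) : Set (ι → ℝ) :=
  ⋃ i, {x | (∀ j, 0 ≤ x j) ∧ x i = a i ∧ ∀ j, j ≠ i → a j ≤ x j}

def gaugeSet (g : (ι → ℝ) → ℝ) : Set (ι → ℝ) := {x | (∀ j, 0 ≤ x j) ∧ g x ≤ 1}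

lemma le_of_mem_orthantBoundary {x : ι → ℝ} (hx : x ∈ orthantBoundary a) : a ≤ x := by
  obtain ⟨i, -, hxi, hxj⟩ := mem_iUnion.1 hx
  intro j
  rcases eq_or_ne j i with rfl | hji
  · exact hxi.ge
  · exact hxj j hji

lemma self_mem_orthantBoundary (ha : 0 ≤ a) (l : ι) : a ∈ orthantBoundary a :=
  mem_iUnion.2 ⟨l, ha, rfl, fun _ _ => le_rfl⟩

lemma one_le_of_mem_orthantBoundary (hgmax : ∀ x : ι → ℝ, (∀ j, 0 ≤ x j) → ∀ j, x j ≤ g x)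
    (hal : a l = 1) {x : ι → ℝ} (hx : x ∈ orthantBoundary a) : 1 ≤ g x := by
  obtain ⟨i, hx0, -, -⟩ := mem_iUnion.1 hx
  exact hal ▸ (le_of_mem_orthantBoundary hx l).trans (hgmax x hx0 l)

lemma one_le_sInf_gauge (hgmax : ∀ x : ι → ℝ, (∀ j, 0 ≤ x j) → ∀ j, x j ≤ g x)
    (ha : 0 ≤ a) (hal : a l = 1) : 1 ≤ sInf (g '' orthantBoundary a) :=
  le_csInf ((nonempty_of_mem (self_mem_orthantBoundary ha l)).image g)
    (forall_mem_image.2 fun _ hx => one_le_of_mem_orthantBoundary hgmax hal hx)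

lemma exists_lt_gauge_of_sInf_lt (hgcont : Continuous g) (ha : 0 ≤ a) (l : ι) {c : ℝ}
    (h : sInf (g '' orthantBoundary a) < c) :
    ∃ u, (∀ j, a j < u j) ∧ (∀ j, 0 ≤ u j) ∧ g u < c := by
  obtain ⟨_, ⟨b, hb, rfl⟩, hbc⟩ :=
    exists_lt_of_csInf_lt ((nonempty_of_mem (self_mem_orthantBoundary ha l)).image g) h
  have hab := le_of_mem_orthantBoundary hb
  have hcont : Continuous fun ε : ℝ => g fun j => b j + ε := by fun_prop
  have hnear : ∀ᶠ ε in 𝓝[>] (0 : ℝ), g (fun j => b j + ε) < c :=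
    (hcont.continuousAt.eventually (gt_mem_nhds (by simpa using hbc))).filter_mono
      nhdsWithin_le_nhds
  obtain ⟨ε, hεc, hε⟩ := (hnear.and self_mem_nhdsWithin).exists
  exact ⟨fun j => b j + ε, fun j => by linarith [hab j],
    fun j => by linarith [show 0 ≤ a j from ha j, hab j], hεc⟩

variable [Fintype ι]

/-- Radial projection onto `B_a`: shrink `u` until it first touches the boundary. -/
lemma exists_smul_mem_orthantBoundary (ha : 0 ≤ a) (hl : 0 < a l) (hau : a ≤ u) :
    ∃ t ∈ Ioc (0 : ℝ) 1, t • u ∈ orthantBoundary a := by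
  have hu : ∀ j, 0 < a j → 0 < u j := fun j hj => hj.trans_le (hau j)
  obtain ⟨i, hi, hmax⟩ := Finset.exists_max_image {j | 0 < a j} (fun j => a j / u j)
    ⟨l, by simpa using hl⟩
  have hai : 0 < a i := by simpa using hi
  refine ⟨a i / u i, ⟨div_pos hai (hu i hai), div_le_one_of_le₀ (hau i) (hu i hai).le⟩,
    mem_iUnion.2 ⟨i, fun j => ?_, div_mul_cancel₀ _ (hu i hai).ne', fun j _ => ?_⟩⟩
  · exact mul_nonneg (div_pos hai (hu i hai)).le ((ha j).trans (hau j))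
  · rcases (ha j).eq_or_lt with hj | hj
    · rw [← hj]
      exact mul_nonneg (div_pos hai (hu i hai)).le ((ha j).trans (hau j))
    · exact (div_le_iff₀ (hu j hj)).1 (hmax j (by simpa using hj))

lemma sInf_gauge_le (hghomog : ∀ t : ℝ, 0 < t → ∀ x, g (t • x) = t * g x)
    (hgmax : ∀ x : ι → ℝ, (∀ j, 0 ≤ x j) → ∀ j, x j ≤ g x)
    (ha : 0 ≤ a) (hal : a l = 1) (hau : a ≤ u) : sInf (g '' orthantBoundary a) ≤ g u := by
  obtain ⟨t, ⟨ht0, ht1⟩, htu⟩ := exists_smul_mem_orthantBoundary ha (hal ▸ one_pos) hau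
  have hgu : 0 ≤ g u := (ha l).trans ((hau l).trans (hgmax u (fun j => (ha j).trans (hau j)) l))
  calc sInf (g '' orthantBoundary a)
      ≤ g (t • u) := csInf_le ⟨1, forall_mem_image.2 fun _ hx =>
          one_le_of_mem_orthantBoundary hgmax hal hx⟩ (mem_image_of_mem g htu)
    _ = t * g u := hghomog t ht0 u
    _ ≤ g u := mul_le_of_le_one_left hgu ht1

lemma sInf_gauge_lt (hghomog : ∀ t : ℝ, 0 < t → ∀ x, g (t • x) = t * g x)
    (hgmax : ∀ x : ι → ℝ, (∀ j, 0 ≤ x j) → ∀ j, x j ≤ g x)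
    (ha : 0 ≤ a) (hal : a l = 1) (hau : ∀ j, a j < u j) : sInf (g '' orthantBoundary a) < g u := by
  have hnear : ∀ᶠ c in 𝓝 (1 : ℝ), ∀ j, c * a j < u j := eventually_all.2 fun j =>
    (continuous_mul_const (a j)).continuousAt.eventually (gt_mem_nhds (by simpa using hau j))
  obtain ⟨c, hcu, hc⟩ := ((hnear.filter_mono nhdsWithin_le_nhds).and
    (self_mem_nhdsWithin (s := Ioi 1))).exists
  have hc0 : 0 < c := one_pos.trans hc
  have hm := one_le_sInf_gauge hgmax ha hal
  have hle : sInf (g '' orthantBoundary a) ≤ c⁻¹ * g u := by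
    rw [← hghomog c⁻¹ (inv_pos.2 hc0)]
    refine sInf_gauge_le hghomog hgmax ha hal fun j => ?_
    rw [Pi.smul_apply, smul_eq_mul, le_inv_mul_iff₀ hc0]
    exact (hcu j).le
  rw [inv_mul_eq_div, le_div_iff₀ hc0] at hle
  nlinarith

end Gauge

section GaugeSet

variable {ι : Type*} {g : (ι → ℝ) → ℝ} {a : ι → ℝ} {l : ι}

lemma zero_mem_gaugeSet (hghomog : ∀ t : ℝ, 0 < t → ∀ x, g (t • x) = t * g x) :
    0 ∈ gaugeSet g := by
  have h := hghomog 2 two_pos 0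
  rw [smul_zero] at h
  exact ⟨fun _ => le_rfl, by linarith⟩

lemma isCompact_gaugeSet [Fintype ι] (hgcont : Continuous g)
    (hgmax : ∀ x : ι → ℝ, (∀ j, 0 ≤ x j) → ∀ j, x j ≤ g x) : IsCompact (gaugeSet g) :=
  isCompact_Icc.of_isClosed_subset (isClosed_Ici.inter (isClosed_le hgcont continuous_const))
    fun x hx => ⟨hx.1, fun j => (hgmax x hx.1 j).trans hx.2⟩

lemma exists_mem_gaugeSet_of_mul_sInf_lt (hgcont : Continuous g)
    (hghomog : ∀ t : ℝ, 0 < t → ∀ x, g (t • x) = t * g x) (ha : 0 ≤ a) (l : ι) {ρ : ℝ}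
    (hρ : 0 < ρ) (h : ρ * sInf (g '' orthantBoundary a) < 1) :
    ∃ x ∈ gaugeSet g, ∀ j, ρ * a j < x j := by
  obtain ⟨u, hau, hu0, hgu⟩ := exists_lt_gauge_of_sInf_lt hgcont ha l (c := ρ⁻¹)
    (by rwa [← one_div, lt_div_iff₀' hρ])
  refine ⟨ρ • u, ⟨fun j => mul_nonneg hρ.le (hu0 j), ?_⟩,
    fun j => mul_lt_mul_of_pos_left (hau j) hρ⟩
  rw [hghomog ρ hρ, ← mul_inv_cancel₀ hρ.ne']
  exact mul_le_mul_of_nonneg_left hgu.le hρ.le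

lemma disjoint_gaugeSet_of_one_lt_mul_sInf [Fintype ι]
    (hghomog : ∀ t : ℝ, 0 < t → ∀ x, g (t • x) = t * g x)
    (hgmax : ∀ x : ι → ℝ, (∀ j, 0 ≤ x j) → ∀ j, x j ≤ g x) (ha : 0 ≤ a) (hal : a l = 1)
    {ρ : ℝ} (hρ : 0 < ρ) (h : 1 < ρ * sInf (g '' orthantBoundary a)) :
    Disjoint (gaugeSet g) {x | ∀ j, ρ * a j ≤ x j} := by
  refine disjoint_left.2 fun y ⟨_, hgy⟩ hy => h.not_ge ?_
  have hle := sInf_gauge_le hghomog hgmax ha hal (u := ρ⁻¹ • y) fun j => by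
    rw [Pi.smul_apply, smul_eq_mul, le_inv_mul_iff₀ hρ]
    exact hy j
  rw [hghomog _ (inv_pos.2 hρ), ← div_eq_inv_mul, le_div_iff₀' hρ] at hle
  exact hle.trans hgy

theorem sInf_smul_inter_gaugeSet_eq_empty (hgcont : Continuous g)
    (hghomog : ∀ t : ℝ, 0 < t → ∀ x, g (t • x) = t * g x)
    (hgmax : ∀ x : ι → ℝ, (∀ j, 0 ≤ x j) → ∀ j, x j ≤ g x) [Fintype ι]
    (ha : 0 ≤ a) (hal : a l = 1) :
    sInf {r : ℝ | r ∈ Icc (0 : ℝ) 1 ∧ (r • {x | ∀ j, a j < x j}) ∩ gaugeSet g = ∅} =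
      (sInf (g '' orthantBoundary a))⁻¹ := by
  set m := sInf (g '' orthantBoundary a)
  have hm : 1 ≤ m := one_le_sInf_gauge hgmax ha hal
  have hm0 : 0 < m := zero_lt_one.trans_le hm
  refine IsLeast.csInf_eq ⟨⟨⟨inv_nonneg.2 hm0.le, inv_le_one_of_one_le₀ hm⟩, ?_⟩, ?_⟩
  · refine eq_empty_of_forall_notMem ?_
    rintro _ ⟨⟨u, hu, rfl⟩, -, hgu⟩
    rw [hghomog _ (inv_pos.2 hm0), inv_mul_le_iff₀ hm0, mul_one] at hgu
    exact (sInf_gauge_lt hghomog hgmax ha hal hu).not_ge hgu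
  · rintro r ⟨⟨hr0, -⟩, hr⟩
    by_contra! hrm
    rcases hr0.eq_or_lt with rfl | hr0
    · rw [zero_smul_set (s := {x : ι → ℝ | ∀ j, a j < x j})
        ⟨fun j => a j + 1, fun j => lt_add_one (a j)⟩] at hr
      exact hr.subset ⟨rfl, zero_mem_gaugeSet hghomog⟩
    · obtain ⟨x, hxG, hx⟩ := exists_mem_gaugeSet_of_mul_sInf_lt hgcont hghomog ha l hr0
        (by rwa [← lt_div_iff₀ hm0, one_div])
      refine hr.subset ⟨(mem_smul_set_iff_inv_smul_mem₀ hr0.ne' _ _).2 fun j => ?_, hxG⟩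
      exact (lt_inv_mul_iff₀ hr0).2 (hx j)

end GaugeSet

section Asymptotics

lemma tendsto_div_natCast_of_tendsto_sub {a : ℕ → ℝ}
    (h : Tendsto (fun n => a (n + 1) - a n) atTop (𝓝 0)) :
    Tendsto (fun n : ℕ => a n / n) atTop (𝓝 0) := by
  have key : (fun n : ℕ => a n / n) =
      fun n : ℕ => a 0 / n + (n : ℝ)⁻¹ * ∑ i ∈ Finset.range n, (a (i + 1) - a i) := by
    ext n
    rw [Finset.sum_range_sub]
    ring
  rw [key]
  simpa using (tendsto_const_nhds.div_atTop tendsto_natCast_atTop_atTop).add h.cesaro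

variable {f : ℝ → ℝ} {c : ℝ}

lemma eventually_abs_sub_floor_le (hstep : Tendsto (fun v => f (v + 1) - f v) atTop (𝓝 0))
    (hle : ∀ᶠ u in atTop, ∀ v, u ≤ v → f v ≤ f u + c * (v - u)) :
    ∀ᶠ v in atTop, |f v - f ⌊v⌋₊| ≤ |c| + 1 := by
  obtain ⟨U, hU⟩ := eventually_atTop.1 (hle.and
    (hstep.eventually (Icc_mem_nhds (by norm_num : (-1 : ℝ) < 0) one_pos)))
  filter_upwards [eventually_ge_atTop (max U 0 + 1)] with v hv
  have hn : (⌊v⌋₊ : ℝ) ≤ v := Nat.floor_le (by linarith [le_max_right U 0])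
  have hn1 : v < ⌊v⌋₊ + 1 := Nat.lt_floor_add_one v
  have hUn : U ≤ ⌊v⌋₊ := by linarith [le_max_left U 0]
  have hup := (hU _ hUn).1 v hn
  have hlow := (hU v (by linarith)).1 _ hn1.le
  have hstep' := (hU _ hUn).2
  have h1 : |c * (v - ⌊v⌋₊)| ≤ |c| := by
    rw [abs_mul]
    exact mul_le_of_le_one_right (abs_nonneg c) (abs_le.2 ⟨by linarith, by linarith⟩)
  have h2 : |c * (⌊v⌋₊ + 1 - v)| ≤ |c| := by
    rw [abs_mul]
    exact mul_le_of_le_one_right (abs_nonneg c) (abs_le.2 ⟨by linarith, by linarith⟩)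
  rw [abs_le] at h1 h2 ⊢
  constructor <;> linarith [hstep'.1, hstep'.2]

lemma tendsto_div_of_tendsto_sub_of_le_add
    (hstep : Tendsto (fun v => f (v + 1) - f v) atTop (𝓝 0))
    (hle : ∀ᶠ u in atTop, ∀ v, u ≤ v → f v ≤ f u + c * (v - u)) :
    Tendsto (fun v => f v / v) atTop (𝓝 0) := by
  have hnat : Tendsto (fun n : ℕ => f n / n) atTop (𝓝 0) :=
    tendsto_div_natCast_of_tendsto_sub (by
      simpa [Function.comp_def] using hstep.comp tendsto_natCast_atTop_atTop)
  have hfloor : Tendsto (fun v : ℝ => f ⌊v⌋₊ / ⌊v⌋₊ * (⌊v⌋₊ / v)) atTop (𝓝 0) := by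
    simpa using (hnat.comp tendsto_nat_floor_atTop).mul tendsto_nat_floor_div_atTop
  have hosc : Tendsto (fun v => (f v - f ⌊v⌋₊) / v) atTop (𝓝 0) := by
    refine squeeze_zero_norm' ?_ (tendsto_const_nhds.div_atTop tendsto_id (a := |c| + 1))
    filter_upwards [eventually_abs_sub_floor_le hstep hle, eventually_gt_atTop 0] with v hv hv0
    rw [Real.norm_eq_abs, abs_div, abs_of_pos hv0, id]
    exact div_le_div_of_nonneg_right hv hv0.le
  have hsum := hfloor.add hosc
  rw [add_zero] at hsum
  refine hsum.congr' ?_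
  filter_upwards [eventually_ge_atTop 1] with v hv
  have hn : (⌊v⌋₊ : ℝ) ≠ 0 := by exact_mod_cast (Nat.floor_pos.2 hv).ne'
  field_simp
  ring

end Asymptotics

namespace SlowlyVaryingAtTop

variable {ℓ : ℝ → ℝ}

lemma eventually_ne_zero (h : SlowlyVaryingAtTop ℓ) : ∀ᶠ t in atTop, ℓ t ≠ 0 := by
  filter_upwards [(h 2 two_pos).eventually_ne one_ne_zero] with t ht h0
  simp [h0] at ht

lemma tendsto_log_comp_exp_sub (h : SlowlyVaryingAtTop ℓ) (hpos : ∀ᶠ v in atTop, 0 < ℓ (exp v)) :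
    Tendsto (fun v => log (ℓ (exp (v + 1))) - log (ℓ (exp v))) atTop (𝓝 0) := by
  have hratio := (continuousAt_log one_ne_zero).tendsto.comp
    ((h (exp 1) (exp_pos 1)).comp tendsto_exp_atTop)
  rw [log_one] at hratio
  refine hratio.congr' ?_
  filter_upwards [hpos, (tendsto_atTop_add_const_right _ 1 tendsto_id).eventually hpos]
    with v hv hv1
  rw [Function.comp_apply, Function.comp_apply, ← exp_add]
  exact log_div hv1.ne' hv.ne'

end SlowlyVaryingAtTop

/-- The monotonicity of `p` stands in for the uniform convergence theorem of regular variation,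
which would need `ℓ` to be measurable. -/
theorem tendsto_log_div_of_eq_mul_exp {p ℓ : ℝ → ℝ} {κ : ℝ} (hsv : SlowlyVaryingAtTop ℓ)
    (hp : Antitone p) (hp0 : ∀ v, 0 ≤ p v)
    (heq : ∀ v, 0 < v → p v = ℓ (exp v) * exp (-(κ * v))) :
    (∀ᶠ v in atTop, 0 < p v) ∧ Tendsto (fun v => log (p v) / v) atTop (𝓝 (-κ)) := by
  have hpos : ∀ᶠ v in atTop, 0 < v ∧ 0 < p v := by
    filter_upwards [tendsto_exp_atTop.eventually hsv.eventually_ne_zero, eventually_gt_atTop 0]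
      with v hv hv0
    refine ⟨hv0, (hp0 v).lt_of_ne ?_⟩
    rw [heq v hv0]
    exact (mul_ne_zero hv (exp_pos _).ne').symm
  have hℓpos : ∀ᶠ v in atTop, 0 < ℓ (exp v) := hpos.mono fun v ⟨hv0, hv⟩ =>
    (pos_iff_pos_of_mul_pos (heq v hv0 ▸ hv)).2 (exp_pos _)
  have hlog : ∀ᶠ v in atTop, log (p v) = log (ℓ (exp v)) - κ * v := by
    filter_upwards [hpos, hℓpos] with v hvp hv
    rw [heq v hvp.1, log_mul hv.ne' (exp_pos _).ne', log_exp]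
    ring
  obtain ⟨U, hU⟩ := eventually_atTop.1 (hpos.and hlog)
  have hle : ∀ᶠ u in atTop, ∀ v, u ≤ v →
      log (ℓ (exp v)) ≤ log (ℓ (exp u)) + κ * (v - u) := by
    filter_upwards [eventually_ge_atTop U] with u hu v huv
    have hmono := log_le_log (hU v (hu.trans huv)).1.2 (hp huv)
    rw [(hU v (hu.trans huv)).2, (hU u hu).2] at hmono
    linarith
  have hsub := (tendsto_div_of_tendsto_sub_of_le_add
    (hsv.tendsto_log_comp_exp_sub hℓpos) hle).sub_const κ
  rw [zero_sub] at hsub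
  refine ⟨hpos.mono fun _ => And.right, hsub.congr' ?_⟩
  filter_upwards [hlog, eventually_gt_atTop 0] with v hv hv0
  rw [hv]
  field_simp

lemma exists_tendsto_eventuallyEq_mul_comp_log {p : ℝ → ℝ} {κ s : ℝ}
    (hpos : ∀ᶠ v in atTop, 0 < p v) (hp : Tendsto (fun v => log (p v) / v) atTop (𝓝 (-κ)))
    (hs : 0 < s) :
    ∃ F : ℝ → ℝ, Tendsto F atTop (𝓝 (1 - κ * s)) ∧
      (fun x => x * p (s * log x)) =ᶠ[atTop] fun x => exp (log x * F x) := by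
  have hv : Tendsto (fun x => s * log x) atTop atTop := tendsto_log_atTop.const_mul_atTop hs
  refine ⟨fun x => 1 + s * (log (p (s * log x)) / (s * log x)), ?_, ?_⟩
  · have hF := (tendsto_const_nhds (x := (1 : ℝ))).add ((hp.comp hv).const_mul s)
    rwa [show 1 + s * -κ = 1 - κ * s by ring] at hF
  · filter_upwards [hv.eventually hpos, eventually_gt_atTop 1] with x hpx hx
    have hlogx : 0 < log x := log_pos hx
    rw [show log x * (1 + s * (log (p (s * log x)) / (s * log x))) =
      log x + log (p (s * log x)) by field_simp, exp_add, exp_log (by linarith), exp_log hpx]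

lemma tendsto_mul_comp_log_atTop {p : ℝ → ℝ} {κ s : ℝ}
    (hpos : ∀ᶠ v in atTop, 0 < p v) (hp : Tendsto (fun v => log (p v) / v) atTop (𝓝 (-κ)))
    (hs : 0 < s) (h : κ * s < 1) : Tendsto (fun x => x * p (s * log x)) atTop atTop := by
  obtain ⟨F, hF, heq⟩ := exists_tendsto_eventuallyEq_mul_comp_log hpos hp hs
  exact (tendsto_exp_atTop.comp (tendsto_log_atTop.atTop_mul_pos (by linarith) hF)).congr'
    heq.symm

lemma tendsto_mul_comp_log_zero {p : ℝ → ℝ} {κ s : ℝ}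
    (hpos : ∀ᶠ v in atTop, 0 < p v) (hp : Tendsto (fun v => log (p v) / v) atTop (𝓝 (-κ)))
    (hs : 0 < s) (h : 1 < κ * s) : Tendsto (fun x => x * p (s * log x)) atTop (𝓝 0) := by
  obtain ⟨F, hF, heq⟩ := exists_tendsto_eventuallyEq_mul_comp_log hpos hp hs
  exact (tendsto_exp_atBot.comp (tendsto_log_atTop.atTop_mul_neg (by linarith) hF)).congr'
    heq.symm

section Sampling

variable {Ω : Type*} [MeasurableSpace Ω] {μ : Measure Ω}

def jointTail {ι : Type*} (μ : Measure Ω) (Y : Ω → ι → ℝ) (c : ι → ℝ) (v : ℝ) : ℝ :=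
  μ.real {a | ∀ j, c j * v < Y a j}

lemma jointTail_antitone {ι : Type*} [IsFiniteMeasure μ] {Y : Ω → ι → ℝ} {c : ι → ℝ}
    (hc : 0 ≤ c) : Antitone (jointTail μ Y c) := fun _ _ huv =>
  measureReal_mono fun _ ha j => (mul_le_mul_of_nonneg_left huv (hc j)).trans_lt (ha j)

lemma not_tendsto_measureReal_compl_zero [IsProbabilityMeasure μ] {E : ℕ → Set Ω}
    (h : Tendsto (fun n => μ.real (E n)) atTop (𝓝 0)) :
    ¬ Tendsto (fun n => μ.real (E n)ᶜ) atTop (𝓝 0) := fun hc => by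
  have h1 : ∀ n, 1 ≤ μ.real (E n) + μ.real (E n)ᶜ := fun n => by
    simpa [union_compl_self] using measureReal_union_le (μ := μ) (E n) (E n)ᶜ
  linarith [ge_of_tendsto' (h.add hc) h1]

variable {β : Type*} [MeasurableSpace β] {X : ℕ → Ω → β}

lemma measureReal_preimage_eq (hX : ∀ i, Measurable (X i))
    (hident : ∀ i, Measure.map (X i) μ = Measure.map (X 0) μ) (i : ℕ) {S : Set β}
    (hS : MeasurableSet S) : μ.real (X i ⁻¹' S) = μ.real (X 0 ⁻¹' S) := by
  rw [measureReal_def, measureReal_def, ← Measure.map_apply (hX i) hS, hident i,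
    Measure.map_apply (hX 0) hS]

lemma measureReal_biUnion_preimage_le (hX : ∀ i, Measurable (X i))
    (hident : ∀ i, Measure.map (X i) μ = Measure.map (X 0) μ) (n : ℕ) {S : Set β}
    (hS : MeasurableSet S) :
    μ.real (⋃ i ∈ Finset.Icc 1 n, X i ⁻¹' S) ≤ n * μ.real (X 0 ⁻¹' S) :=
  calc μ.real (⋃ i ∈ Finset.Icc 1 n, X i ⁻¹' S)
      ≤ ∑ i ∈ Finset.Icc 1 n, μ.real (X i ⁻¹' S) := measureReal_biUnion_finset_le _ _
    _ = n * μ.real (X 0 ⁻¹' S) := by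
        simp [Finset.sum_congr rfl fun i _ => measureReal_preimage_eq hX hident i hS]

lemma measureReal_biInter_preimage_compl [IsProbabilityMeasure μ] (hX : ∀ i, Measurable (X i))
    (hindep : iIndepFun X μ) (hident : ∀ i, Measure.map (X i) μ = Measure.map (X 0) μ)
    (n : ℕ) {S : Set β} (hS : MeasurableSet S) :
    μ.real (⋂ i ∈ Finset.Icc 1 n, X i ⁻¹' Sᶜ) = (1 - μ.real (X 0 ⁻¹' S)) ^ n := by
  rw [measureReal_def, hindep.measure_inter_preimage_eq_mul _ fun _ _ => hS.compl,
    ENNReal.toReal_prod]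
  simp_rw [← measureReal_def]
  rw [Finset.prod_congr rfl fun i _ => measureReal_preimage_eq hX hident i hS.compl,
    Finset.prod_const, Nat.card_Icc, add_tsub_cancel_right, preimage_compl,
    probReal_compl_eq_one_sub (hX 0 hS)]

end Sampling

lemma sampleCloud_finite {Ω : Type*} {d : ℕ} (X : ℕ → Ω → (Fin d → ℝ)) (r : ℕ → ℝ) (n : ℕ)
    (a : Ω) : (sampleCloud X r n a).Finite :=
  ((finite_Icc 1 n).image fun i => (r n)⁻¹ • X i a).subset
    fun _ ⟨i, h1, h2, hy⟩ => ⟨i, ⟨h1, h2⟩, hy.symm⟩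

lemma eventually_hausdorffEDist_sampleCloud_ne_top {Ω : Type*} {d : ℕ}
    {X : ℕ → Ω → (Fin d → ℝ)} {r : ℕ → ℝ} {G : Set (Fin d → ℝ)} (hG : Bornology.IsBounded G)
    (hGne : G.Nonempty) :
    ∀ᶠ n in atTop, ∀ a, Metric.hausdorffEDist (sampleCloud X r n a) G ≠ ⊤ :=
  (eventually_ge_atTop 1).mono fun n hn a =>
    Metric.hausdorffEDist_ne_top_of_nonempty_of_bounded ⟨_, 1, le_rfl, hn, rfl⟩ hGne
      (sampleCloud_finite X r n a).isBounded hG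

namespace ConvInProbOnto

variable {Ω : Type*} [MeasurableSpace Ω] {μ : Measure Ω} {d : ℕ}
  {N : ℕ → Ω → Set (Fin d → ℝ)} {G : Set (Fin d → ℝ)}

lemma tendsto_measureReal (h : ConvInProbOnto μ N G) {ε : ℝ} (hε : 0 < ε) :
    Tendsto (fun n => μ.real {a | ε < Metric.hausdorffDist (N n a) G}) atTop (𝓝 0) := by
  have h' := (ENNReal.tendsto_toReal ENNReal.zero_ne_top).comp (h ε hε)
  rwa [ENNReal.toReal_zero] at h'

variable [IsFiniteMeasure μ]

lemma tendsto_measureReal_not_inter_nonempty (h : ConvInProbOnto μ N G)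
    (hfin : ∀ᶠ n in atTop, ∀ a, Metric.hausdorffEDist (N n a) G ≠ ⊤) {U : Set (Fin d → ℝ)}
    (hU : IsOpen U) (hGU : (G ∩ U).Nonempty) :
    Tendsto (fun n => μ.real {a | ¬ (N n a ∩ U).Nonempty}) atTop (𝓝 0) := by
  obtain ⟨x, hxG, hxU⟩ := hGU
  obtain ⟨δ, hδ, hball⟩ := Metric.isOpen_iff.1 hU x hxU
  refine squeeze_zero' (Eventually.of_forall fun _ => measureReal_nonneg) ?_
    (h.tendsto_measureReal (half_pos hδ))
  filter_upwards [hfin] with n hn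
  refine measureReal_mono fun a ha => ?_
  by_contra hclose
  replace hclose : Metric.hausdorffDist (N n a) G ≤ δ / 2 := not_lt.1 hclose
  obtain ⟨z, hz, hxz⟩ := Metric.exists_dist_lt_of_hausdorffDist_lt' hxG
    (hclose.trans_lt (half_lt_self hδ)) (hn a)
  exact ha ⟨z, hz, hball (Metric.mem_ball.2 hxz)⟩

lemma tendsto_measureReal_inter_nonempty (h : ConvInProbOnto μ N G)
    (hfin : ∀ᶠ n in atTop, ∀ a, Metric.hausdorffEDist (N n a) G ≠ ⊤) {K : Set (Fin d → ℝ)}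
    (hG : IsCompact G) (hK : IsClosed K) (hGK : Disjoint G K) :
    Tendsto (fun n => μ.real {a | (N n a ∩ K).Nonempty}) atTop (𝓝 0) := by
  obtain ⟨δ, hδ, hthick⟩ :=
    hG.exists_thickening_subset_open hK.isOpen_compl hGK.subset_compl_right
  refine squeeze_zero' (Eventually.of_forall fun _ => measureReal_nonneg) ?_
    (h.tendsto_measureReal (half_pos hδ))
  filter_upwards [hfin] with n hn
  refine measureReal_mono fun a ⟨z, hzN, hzK⟩ => ?_
  by_contra hclose
  replace hclose : Metric.hausdorffDist (N n a) G ≤ δ / 2 := not_lt.1 hclose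
  obtain ⟨y, hyG, hzy⟩ := Metric.exists_dist_lt_of_hausdorffDist_lt hzN
    (hclose.trans_lt (half_lt_self hδ)) (hn a)
  exact hthick (Metric.mem_thickening_iff.2 ⟨y, hyG, hzy⟩) hzK

end ConvInProbOnto

lemma one_sub_pow_le_exp_neg_mul {q : ℝ} (hq : q ≤ 1) (n : ℕ) : (1 - q) ^ n ≤ exp (-(n * q)) := by
  rw [← mul_neg, exp_nat_mul]
  exact pow_le_pow_left₀ (sub_nonneg.2 hq) (one_sub_le_exp_neg q) n

lemma isOpen_setOf_forall_lt {ι : Type*} [Finite ι] (b : ι → ℝ) :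
    IsOpen {y : ι → ℝ | ∀ j, b j < y j} := by
  rw [ofPred_forall]
  exact isOpen_iInter_of_finite fun j => isOpen_lt continuous_const (continuous_apply j)

lemma lt_inv_smul_apply_iff {ι : Type*} {r s : ℝ} (hr : 0 < r) {c y : ι → ℝ} {j : ι} :
    s * c j < (r⁻¹ • y) j ↔ c j * (s * r) < y j := by
  rw [Pi.smul_apply, smul_eq_mul, lt_inv_mul_iff₀ hr, show r * (s * c j) = c j * (s * r) by ring]

section LimitSet

variable {Ω : Type*} [MeasurableSpace Ω] {μ : Measure Ω} [IsProbabilityMeasure μ] {d : ℕ}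
  {X : ℕ → Ω → (Fin d → ℝ)} {G : Set (Fin d → ℝ)} {c : Fin d → ℝ} {s : ℝ}

theorem not_tendsto_mul_jointTail_zero (hX : ∀ i, Measurable (X i))
    (hident : ∀ i, Measure.map (X i) μ = Measure.map (X 0) μ) (hG : IsCompact G)
    (hconv : ConvInProbOnto μ (sampleCloud X fun n => log n) G) {x : Fin d → ℝ} (hxG : x ∈ G)
    (hx : ∀ j, s * c j < x j) :
    ¬ Tendsto (fun n : ℕ => n * jointTail μ (X 0) c (s * log n)) atTop (𝓝 0) := by
  intro h0
  refine not_tendsto_measureReal_compl_zero ?_ (hconv.tendsto_measureReal_not_inter_nonempty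
    (eventually_hausdorffEDist_sampleCloud_ne_top hG.isBounded ⟨x, hxG⟩)
    (isOpen_setOf_forall_lt fun j => s * c j) ⟨x, hxG, hx⟩)
  refine squeeze_zero' (Eventually.of_forall fun _ => measureReal_nonneg) ?_ h0
  filter_upwards [eventually_ge_atTop 2] with n hn
  have hlog : 0 < log n := log_pos (by exact_mod_cast hn)
  refine le_trans (measureReal_mono ?_ (measure_ne_top μ _))
    (measureReal_biUnion_preimage_le hX hident n
    (isOpen_setOf_forall_lt fun j => c j * (s * log n)).measurableSet)
  rintro a ⟨_, ⟨i, h1, h2, rfl⟩, hi⟩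
  exact mem_iUnion₂.2 ⟨i, Finset.mem_Icc.2 ⟨h1, h2⟩, fun j => (lt_inv_smul_apply_iff hlog).1 (hi j)⟩

theorem not_tendsto_mul_jointTail_atTop (hX : ∀ i, Measurable (X i)) (hindep : iIndepFun X μ)
    (hident : ∀ i, Measure.map (X i) μ = Measure.map (X 0) μ) (hG : IsCompact G)
    (hGne : G.Nonempty) (hconv : ConvInProbOnto μ (sampleCloud X fun n => log n) G)
    (hGK : Disjoint G {y | ∀ j, s * c j ≤ y j}) :
    ¬ Tendsto (fun n : ℕ => n * jointTail μ (X 0) c (s * log n)) atTop atTop := by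
  intro htop
  refine not_tendsto_measureReal_compl_zero (hconv.tendsto_measureReal_inter_nonempty
    (eventually_hausdorffEDist_sampleCloud_ne_top hG.isBounded hGne) hG
    (isClosed_Ici (a := fun j => s * c j)) hGK) ?_
  refine squeeze_zero' (Eventually.of_forall fun _ => measureReal_nonneg) ?_
    (tendsto_exp_neg_atTop_nhds_zero.comp htop)
  filter_upwards [eventually_ge_atTop 2] with n hn
  have hlog : 0 < log n := log_pos (by exact_mod_cast hn)
  calc μ.real {a | (sampleCloud X (fun n => log n) n a ∩ {y | ∀ j, s * c j ≤ y j}).Nonempty}ᶜ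
      ≤ μ.real (⋂ i ∈ Finset.Icc 1 n, X i ⁻¹' {y | ∀ j, c j * (s * log n) < y j}ᶜ) :=
        measureReal_mono fun a ha => mem_iInter₂.2 fun i hi hXi =>
          ha ⟨_, ⟨i, (Finset.mem_Icc.1 hi).1, (Finset.mem_Icc.1 hi).2, rfl⟩,
            fun j => ((lt_inv_smul_apply_iff hlog).2 (hXi j)).le⟩
    _ = (1 - jointTail μ (X 0) c (s * log n)) ^ n := measureReal_biInter_preimage_compl hX hindep
        hident n (isOpen_setOf_forall_lt fun j => c j * (s * log n)).measurableSet
    _ ≤ exp (-(n * jointTail μ (X 0) c (s * log n))) :=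
        one_sub_pow_le_exp_neg_mul measureReal_le_one n

end LimitSet

lemma eq_of_forall_pos_mul_lt_one_imp {κ κ' : ℝ} (hκ' : 0 < κ')
    (hle : ∀ s, 0 < s → s * κ' < 1 → κ * s ≤ 1) (hge : ∀ s, 0 < s → 1 < s * κ' → 1 ≤ κ * s) :
    κ = κ' := by
  have hκ : 0 < κ := by
    have h := hge (2 / κ') (by positivity) (by rw [div_mul_cancel₀ _ hκ'.ne']; norm_num)
    nlinarith [div_pos two_pos hκ']
  refine le_antisymm (le_of_forall_gt_imp_ge_of_dense fun t ht => ?_)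
    (le_of_forall_lt_imp_le_of_dense fun t ht => ?_)
  · have ht0 : 0 < t := hκ'.trans ht
    have h := hle t⁻¹ (inv_pos.2 ht0) (by rwa [inv_mul_lt_iff₀ ht0, mul_one])
    rwa [mul_inv_le_iff₀ ht0, one_mul] at h
  · rcases le_or_gt t 0 with ht0 | ht0
    · exact ht0.trans hκ.le
    · have h := hge t⁻¹ (inv_pos.2 ht0) (by rwa [lt_inv_mul_iff₀ ht0, mul_one])
      rwa [le_mul_inv_iff₀ ht0, one_mul] at h

lemma iSup_pos_and_exists_div_iSup_eq_one {ι : Type*} [Fintype ι] {ω : ι → ℝ} (hω : 0 ≤ ω)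
    (hsum : ∑ j, ω j = 1) : 0 < ⨆ i, ω i ∧ ∃ l, ω l / ⨆ i, ω i = 1 := by
  obtain ⟨j, -, hj⟩ := Finset.exists_ne_zero_of_sum_ne_zero (hsum ▸ one_ne_zero)
  have : Nonempty ι := ⟨j⟩
  obtain ⟨l, hl⟩ := Finite.exists_max ω
  have hM : (⨆ i, ω i) = ω l := le_antisymm (ciSup_le hl) (le_ciSup (Finite.bddAbove_range ω) l)
  have hl0 : 0 < ω l := ((hω j).lt_of_ne' hj).trans_le (hl j)
  exact ⟨hM ▸ hl0, l, by rw [hM, div_self hl0.ne']⟩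

theorem angular_dependence_via_gauge_general
    {Ω : Type*} [MeasurableSpace Ω] (μ : Measure Ω) [IsProbabilityMeasure μ]
    {d : ℕ}
    (X : ℕ → Ω → (Fin d → ℝ)) (hXmeas : ∀ i, Measurable (X i))
    -- i.i.d. copies with standard exponential margins
    (hindep : iIndepFun X μ)
    (hident : ∀ i, Measure.map (X i) μ = Measure.map (X 0) μ)
    -- the gauge function g and its limit set G
    (g : (Fin d → ℝ) → ℝ) (hgcont : Continuous g)
    (hghomog : ∀ t : ℝ, 0 < t → ∀ x, g (t • x) = t * g x)
    (hgmax : ∀ x : Fin d → ℝ, (∀ j, 0 ≤ x j) → ∀ j, x j ≤ g x)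
    (G : Set (Fin d → ℝ)) (hG : G = {x | (∀ j, 0 ≤ x j) ∧ g x ≤ 1})
    (hconv : ConvInProbOnto μ (sampleCloud X fun n => Real.log n) G)
    -- the angular dependence function λ(ω)
    (lam : (Fin d → ℝ) → ℝ)
    (hlam : ∀ ω : Fin d → ℝ, (∀ j, 0 ≤ ω j) → ∑ j, ω j = 1 →
      ∃ ℓ : ℝ → ℝ, SlowlyVaryingAtTop ℓ ∧ ∀ v : ℝ, 0 < v →
        (μ {a | ∀ j, ω j * v < X 0 a j}).toReal = ℓ (Real.exp v) * Real.exp (-(lam ω * v))) :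
    ∀ ω : Fin d → ℝ, (∀ j, 0 ≤ ω j) → ∑ j, ω j = 1 →
      sInf {r : ℝ | r ∈ Set.Icc (0:ℝ) 1 ∧
          (r • {x : Fin d → ℝ | ∀ j, ω j / (⨆ i, ω i) < x j}) ∩ G = ∅} =
        (sInf (g '' (⋃ i : Fin d, {x : Fin d → ℝ | (∀ j, 0 ≤ x j) ∧
          x i = ω i / (⨆ l, ω l) ∧ ∀ j, j ≠ i → ω j / (⨆ l, ω l) ≤ x j})))⁻¹ ∧
      lam ω = (⨆ j, ω j) *
        sInf (g '' (⋃ i : Fin d, {x : Fin d → ℝ | (∀ j, 0 ≤ x j) ∧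
          x i = ω i / (⨆ l, ω l) ∧ ∀ j, j ≠ i → ω j / (⨆ l, ω l) ≤ x j})) := by
  intro ω hω hsum
  subst hG
  obtain ⟨hM0, l, hal⟩ := iSup_pos_and_exists_div_iSup_eq_one hω hsum
  set a : Fin d → ℝ := fun j => ω j / ⨆ i, ω i
  have ha : 0 ≤ a := fun j => div_nonneg (hω j) hM0.le
  have hsa : ∀ s j, s * (⨆ i, ω i) * a j = s * ω j := fun s j => by
    simp only [a]
    field_simp
  have hGc := isCompact_gaugeSet hgcont hgmax
  have hm := one_le_sInf_gauge hgmax ha hal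
  refine ⟨sInf_smul_inter_gaugeSet_eq_empty hgcont hghomog hgmax ha hal, ?_⟩
  obtain ⟨ℓ, hsv, hℓ⟩ := hlam ω hω hsum
  obtain ⟨hpos, hrate⟩ :=
    tendsto_log_div_of_eq_mul_exp hsv (jointTail_antitone hω) (fun _ => measureReal_nonneg) hℓ
  refine eq_of_forall_pos_mul_lt_one_imp (mul_pos hM0 (zero_lt_one.trans_le hm))
    (fun s hs h => ?_) (fun s hs h => ?_)
  · obtain ⟨x, hxG, hx⟩ := exists_mem_gaugeSet_of_mul_sInf_lt hgcont hghomog ha l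
      (mul_pos hs hM0) (by rwa [mul_assoc])
    by_contra! hκ
    exact not_tendsto_mul_jointTail_zero hXmeas hident hGc hconv hxG (fun j => hsa s j ▸ hx j)
      ((tendsto_mul_comp_log_zero hpos hrate hs hκ).comp tendsto_natCast_atTop_atTop)
  · have hGK := disjoint_gaugeSet_of_one_lt_mul_sInf hghomog hgmax ha hal (mul_pos hs hM0)
      (by rwa [mul_assoc])
    simp only [hsa] at hGK
    by_contra! hκ
    exact not_tendsto_mul_jointTail_atTop hXmeas hindep hident hGc ⟨0, zero_mem_gaugeSet hghomog⟩
      hconv hGK ((tendsto_mul_comp_log_atTop hpos hrate hs hκ).comp tendsto_natCast_atTop_atTop)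

/-- Proposition 8 of the paper: under the hypotheses of the proposition
linking `λ` to the limit set `G = {x ∈ ℝ₊^d : g(x) ≤ 1}`,
`r_ω = [min_{y ∈ B_ω} g(y)]⁻¹` and hence `λ(ω) = max(ω) · min_{y ∈ B_ω} g(y)`, where `B_ω` is
the boundary of `R_ω = ∏_j (ω_j/max(ω), ∞)`. -/
theorem angular_dependence_via_gauge
    {Ω : Type*} [MeasurableSpace Ω] (μ : Measure Ω) [IsProbabilityMeasure μ]
    {d : ℕ} (hd : 0 < d)
    (X : ℕ → Ω → (Fin d → ℝ)) (hXmeas : ∀ i, Measurable (X i))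
    -- i.i.d. copies with standard exponential margins
    (hindep : iIndepFun X μ)
    (hident : ∀ i, Measure.map (X i) μ = Measure.map (X 0) μ)
    (hmarg : ∀ j, ∀ x : ℝ, 0 ≤ x → (μ {ω | x < X 0 ω j}).toReal = Real.exp (-x))
    -- the gauge function g and its limit set G
    (g : (Fin d → ℝ) → ℝ) (hgcont : Continuous g)
    (hghomog : ∀ t : ℝ, 0 < t → ∀ x, g (t • x) = t * g x)
    (hgmax : ∀ x : Fin d → ℝ, (∀ j, 0 ≤ x j) → ∀ j, x j ≤ g x)
    (G : Set (Fin d → ℝ)) (hG : G = {x | (∀ j, 0 ≤ x j) ∧ g x ≤ 1})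
    (hGsup : ∀ j, IsLUB ((fun x : Fin d → ℝ => x j) '' G) 1)
    (hconv : ConvInProbOnto μ (sampleCloud X fun n => Real.log n) G)
    -- the angular dependence function λ(ω)
    (lam : (Fin d → ℝ) → ℝ)
    (hlam : ∀ ω : Fin d → ℝ, (∀ j, 0 ≤ ω j) → ∑ j, ω j = 1 →
      ∃ ℓ : ℝ → ℝ, SlowlyVaryingAtTop ℓ ∧ ∀ v : ℝ, 0 < v →
        (μ {a | ∀ j, ω j * v < X 0 a j}).toReal = ℓ (Real.exp v) * Real.exp (-(lam ω * v))) :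
    ∀ ω : Fin d → ℝ, (∀ j, 0 ≤ ω j) → ∑ j, ω j = 1 →
      sInf {r : ℝ | r ∈ Set.Icc (0:ℝ) 1 ∧
          (r • {x : Fin d → ℝ | ∀ j, ω j / (⨆ i, ω i) < x j}) ∩ G = ∅} =
        (sInf (g '' (⋃ i : Fin d, {x : Fin d → ℝ | (∀ j, 0 ≤ x j) ∧
          x i = ω i / (⨆ l, ω l) ∧ ∀ j, j ≠ i → ω j / (⨆ l, ω l) ≤ x j})))⁻¹ ∧
      lam ω = (⨆ j, ω j) *
        sInf (g '' (⋃ i : Fin d, {x : Fin d → ℝ | (∀ j, 0 ≤ x j) ∧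
          x i = ω i / (⨆ l, ω l) ∧ ∀ j, j ≠ i → ω j / (⨆ l, ω l) ≤ x j})) :=
  angular_dependence_via_gauge_general μ X hXmeas hindep hident g hgcont hghomog hgmax G hG hconv
    lam hlam
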